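/- For odd n = 2k+1 with k ≥ 2 and the weights of the large-volume construction, ∑_{i=2}^{k-1} a_{2i-1} + a_{n-1} + a_1 = a_n; that is, (h/2)(1/s_{k-1} + ... + 1/s_2) + h/4 + 1 = h/3 where h = 2(s_k - 1). -/

import Mathlib

/-!
The classical identity `s_k - 1 = s_0 ⋯ s_{k-1}` makes every `s_j` with `j < k` divide `s_k - 1`,
so all divisions are exact, and it turns `∑_{j<k} 1/s_j = 1 - 1/(s_k - 1)` into the identity
`∑_{j<k} (s_k - 1)/s_j + 1 = s_k - 1` in `ℕ`. Removing the terms `j = 0, 1`, i.e. `(s_k - 1)/2`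
and `(s_k - 1)/3`, leaves `∑_{j=2}^{k-1} (s_k - 1)/s_j = (s_k - 1)/6 - 1`, and with `h = 2(s_k - 1)`
the claim becomes `(s_k - 1)/6 + (s_k - 1)/2 = 2(s_k - 1)/3`.
-/

def sylvester : ℕ → ℕ
  | 0 => 2
  | n + 1 => sylvester n * (sylvester n - 1) + 1

open Finset

theorem sylvester_succ_sub_one (n : ℕ) :
    sylvester (n + 1) - 1 = sylvester n * (sylvester n - 1) := by
  simp [sylvester]

theorem sylvester_sub_one_eq_prod (k : ℕ) :
    sylvester k - 1 = ∏ j ∈ range k, sylvester j := by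
  induction k with
  | zero => rfl
  | succ k ih => rw [sylvester_succ_sub_one, prod_range_succ, ih, mul_comm]

theorem two_le_sylvester (n : ℕ) : 2 ≤ sylvester n := by
  induction n with
  | zero => rfl
  | succ n ih =>
    rw [sylvester]
    have : 2 * 1 ≤ sylvester n * (sylvester n - 1) := Nat.mul_le_mul ih (by omega)
    omega

theorem sylvester_dvd_sub_one {j k : ℕ} (hjk : j < k) : sylvester j ∣ sylvester k - 1 := by
  rw [sylvester_sub_one_eq_prod]
  exact dvd_prod_of_mem _ (mem_range.2 hjk)

theorem six_dvd_sylvester_sub_one {k : ℕ} (hk : 2 ≤ k) : 6 ∣ sylvester k - 1 := by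
  rw [sylvester_sub_one_eq_prod]
  exact prod_dvd_prod_of_subset _ _ _ (range_subset_range.2 hk)

theorem sum_range_sylvester_div_add_one (k : ℕ) :
    ∑ j ∈ range k, (sylvester k - 1) / sylvester j + 1 = sylvester k - 1 := by
  induction k with
  | zero => rfl
  | succ k ih =>
    have hpos : 0 < sylvester k := by have := two_le_sylvester k; omega
    have hterm : ∀ j ∈ range k,
        (sylvester (k + 1) - 1) / sylvester j = sylvester k * ((sylvester k - 1) / sylvester j) :=
      fun j hj => by
        rw [sylvester_succ_sub_one, Nat.mul_div_assoc _ (sylvester_dvd_sub_one (mem_range.1 hj))]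
    rw [sum_range_succ, sum_congr rfl hterm, ← mul_sum, sylvester_succ_sub_one,
      Nat.mul_div_cancel_left _ hpos]
    set S := ∑ j ∈ range k, (sylvester k - 1) / sylvester j
    have hs : sylvester k = S + 2 := by have := two_le_sylvester k; omega
    rw [hs, show S + 2 - 1 = S + 1 from rfl]
    ring

theorem large_volume_an_relation (k : ℕ) (hk : 2 ≤ k)
    (h : ℕ) (hh : h = 2 * (sylvester k - 1)) :
    (∑ i ∈ Finset.Icc 2 (k - 1), h / (2 * sylvester (k + 1 - i))) + h / 4 + 1
      = h / 3 := by
  subst hh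
  set f : ℕ → ℕ := fun j => (sylvester k - 1) / sylvester j
  have hreflect : ∑ i ∈ Icc 2 (k - 1), f (k + 1 - i) = ∑ j ∈ Ico 2 k, f j := by
    rw [show Icc 2 (k - 1) = Ico 2 k by ext; simp only [mem_Icc, mem_Ico]; omega,
      sum_Ico_reflect f 2 (show k ≤ k + 1 + 1 by omega),
      show k + 1 + 1 - k = 2 by omega, show k + 1 + 1 - 2 = k by omega]
  have hsplit : f 0 + f 1 + ∑ j ∈ Ico 2 k, f j + 1 = sylvester k - 1 := by
    rw [← sum_range_sylvester_div_add_one k, ← sum_range_add_sum_Ico _ hk, sum_range_succ,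
      sum_range_one]
  rw [sum_congr rfl fun i _ => Nat.mul_div_mul_left _ _ two_pos, hreflect]
  have h6 := six_dvd_sylvester_sub_one hk
  simp only [f, sylvester] at hsplit ⊢
  omega
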